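/- arXiv:2511.02081 — 2 statements merged into one kernel-verified Lean document; each statement's English description precedes it below -/
import Mathlib

section
/- Let D = (V, A) be a Steiner rooted k-arc-connected directed graph with root r ∈ V and terminal set S ⊆ V − r. Let S' ⊆ S, and for each s ∈ S' let U_s be a tight s-cut. Suppose there exists s_0 ∈ S' such that the number of arcs leaving U_s ∪ U_{s_0} is at least k for all s ∈ S' − s_0. Then ⋂_{s ∈ S'} U_s is a tight s-cut for every s ∈ S'. -/
/-- A finite loopless directed multigraph on vertex set `verts`; the arcs are
recorded as a multiset of ordered pairs `(tail, head)`, so that parallel arcs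
are allowed. -/
structure MDigraph (α : Type) where
  verts : Finset α
  arcs : Multiset (α × α)
  tail_mem : ∀ e ∈ arcs, e.1 ∈ verts
  head_mem : ∀ e ∈ arcs, e.2 ∈ verts
  loopless : ∀ e ∈ arcs, e.1 ≠ e.2

namespace MDigraph

variable {α : Type} [DecidableEq α]

/-- `p` is the vertex sequence of a directed path in `D` from `u` to `v`. -/
def IsDipath (D : MDigraph α) (p : List α) (u v : α) : Prop :=
  p.Nodup ∧ p.head? = some u ∧ p.getLast? = some v ∧
    (∀ x ∈ p, x ∈ D.verts) ∧ List.Chain' (fun x y => (x, y) ∈ D.arcs) p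

/-- The multiset of arcs traversed by a directed path given by its vertex sequence. -/
def pathArcs (p : List α) : Multiset (α × α) := ↑(p.zip p.tail)

/-- There exist `k` pairwise arc-disjoint directed paths from `u` to `v` in `D`
(each copy of an arc may be used by at most one of the paths). -/
def HasArcDisjointPaths (D : MDigraph α) (u v : α) (k : ℕ) : Prop :=
  ∃ P : Fin k → List α, (∀ i, D.IsDipath (P i) u v) ∧
    (∑ i : Fin k, pathArcs (P i)) ≤ D.arcs

/-- `D` is Steiner rooted `k`-arc-connected with root `r` and terminal set `S`:
for every terminal `s ∈ S` there are `k` pairwise arc-disjoint directed `r`-`s` paths. -/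
def SteinerRooted (D : MDigraph α) (r : α) (S : Finset α) (k : ℕ) : Prop :=
  ∀ s ∈ S, D.HasArcDisjointPaths r s k

/-- The in-degree of a vertex. -/
def inDeg (D : MDigraph α) (v : α) : ℕ := (D.arcs.filter (fun e => e.2 = v)).card

/-- The out-degree of a vertex. -/
def outDeg (D : MDigraph α) (v : α) : ℕ := (D.arcs.filter (fun e => e.1 = v)).card

/-- The number of arcs leaving the vertex set `X` (tail in `X`, head outside `X`). -/
def outDegOf (D : MDigraph α) (X : Finset α) : ℕ :=
  (D.arcs.filter (fun e => e.1 ∈ X ∧ e.2 ∉ X)).card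

/-- `D` is `3`-regular with respect to root `r`, terminal set `S` and connectivity `k`:
the root has in-degree `0` and out-degree `k`, every terminal has in-degree `k` and
out-degree `0`, and every other vertex has in-degree plus out-degree equal to `3`. -/
def ThreeRegular (D : MDigraph α) (r : α) (S : Finset α) (k : ℕ) : Prop :=
  D.inDeg r = 0 ∧ D.outDeg r = k ∧ (∀ s ∈ S, D.inDeg s = k ∧ D.outDeg s = 0) ∧
    ∀ v ∈ D.verts, v ≠ r → v ∉ S → D.inDeg v + D.outDeg v = 3

/-- Delete (one copy of) the arc `e` from `D`. -/
def delArc (D : MDigraph α) (e : α × α) : MDigraph α where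
  verts := D.verts
  arcs := D.arcs.erase e
  tail_mem := fun a ha => D.tail_mem a (Multiset.mem_of_mem_erase ha)
  head_mem := fun a ha => D.head_mem a (Multiset.mem_of_mem_erase ha)
  loopless := fun a ha => D.loopless a (Multiset.mem_of_mem_erase ha)

/-- `D` is minimally Steiner rooted `k`-arc-connected: it is Steiner rooted
`k`-arc-connected but deleting any arc destroys this property. -/
def MinSteinerRooted (D : MDigraph α) (r : α) (S : Finset α) (k : ℕ) : Prop :=
  D.SteinerRooted r S k ∧ ∀ e ∈ D.arcs, ¬ (D.delArc e).SteinerRooted r S k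

/-- `U` is a tight `s`-cut: `r ∈ U`, `s ∉ U`, and exactly `k` arcs leave `U`. -/
def IsTightCut (D : MDigraph α) (r s : α) (k : ℕ) (U : Finset α) : Prop :=
  r ∈ U ∧ s ∉ U ∧ D.outDegOf U = k

/-- The multiset of arcs of a directed cycle given by its vertex sequence. -/
def cycleArcs (c : List α) : Multiset (α × α) := ↑(c.zip (c.rotate 1))

/-- `c` is the vertex sequence of a directed cycle in `D`. -/
def IsDicycle (D : MDigraph α) (c : List α) : Prop :=
  c.Nodup ∧ 2 ≤ c.length ∧ cycleArcs c ≤ D.arcs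

end MDigraph

/-!
Each of `k` arc-disjoint `r`–`s` paths leaves every `s`-cut, so every `s`-cut has out-degree at
least `k`. Together with submodularity of the out-degree, `d(X ∪ Y) + d(X ∩ Y) ≤ d(X) + d(Y)`,
this makes the tight `s`-cuts closed under intersection. For `s ∈ S'`, the bound on
`d(U s ∪ U s₀)` forces `U s ∩ U s₀` to be a tight `s₀`-cut, and `⋂ U s` is the intersection of
these tight `s₀`-cuts; it misses every `s ∈ S'` because it lies in `U s`.
-/

theorem List.exists_mem_zip_tail_of_head?_of_getLast? {α : Type*} {p : α → Prop} :
    ∀ {l : List α} {u v : α}, l.head? = some u → l.getLast? = some v → p u → ¬ p v →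
      ∃ e ∈ l.zip l.tail, p e.1 ∧ ¬ p e.2
  | [], _, _, hu, _, _, _ => nomatch hu
  | [a], _, _, hu, hv, hpu, hpv => by
    simp only [List.head?_cons, List.getLast?_singleton, Option.some.injEq] at hu hv
    exact absurd (hv ▸ hu ▸ hpu) hpv
  | a :: b :: t, _, _, hu, hv, hpu, hpv => by
    simp only [List.head?_cons, Option.some.injEq] at hu
    subst hu
    by_cases hpb : p b
    · obtain ⟨e, he, hpe⟩ := List.exists_mem_zip_tail_of_head?_of_getLast? (l := b :: t)
        rfl (by rwa [List.getLast?_cons_cons] at hv) hpb hpv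
      exact ⟨e, List.mem_cons_of_mem _ he, hpe⟩
    · exact ⟨(a, b), by simp, hpu, hpb⟩

namespace MDigraph

variable {α : Type} [DecidableEq α] {D : MDigraph α} {r s t u v : α} {k : ℕ} {X Y : Finset α}

theorem outDegOf_eq_countP (D : MDigraph α) (X : Finset α) :
    D.outDegOf X = D.arcs.countP (fun e => e.1 ∈ X ∧ e.2 ∉ X) :=
  (Multiset.countP_eq_card_filter _ _).symm

theorem outDegOf_union_add_outDegOf_inter_le (D : MDigraph α) (X Y : Finset α) :
    D.outDegOf (X ∪ Y) + D.outDegOf (X ∩ Y) ≤ D.outDegOf X + D.outDegOf Y := by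
  simp only [outDegOf_eq_countP]
  induction D.arcs using Multiset.induction with
  | empty => simp
  | cons e A ih =>
    have hpt : (if e.1 ∈ X ∪ Y ∧ e.2 ∉ X ∪ Y then 1 else 0) +
        (if e.1 ∈ X ∩ Y ∧ e.2 ∉ X ∩ Y then 1 else 0) ≤
        (if e.1 ∈ X ∧ e.2 ∉ X then 1 else 0) + (if e.1 ∈ Y ∧ e.2 ∉ Y then 1 else 0) := by
      simp only [Finset.mem_union, Finset.mem_inter]
      split_ifs <;> simp <;> tauto
    simp only [Multiset.countP_cons]
    omega

theorem HasArcDisjointPaths.le_outDegOf (h : D.HasArcDisjointPaths u v k) (hu : u ∈ X)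
    (hv : v ∉ X) : k ≤ D.outDegOf X := by
  obtain ⟨P, hP, hPD⟩ := h
  let leaves : α × α → Prop := fun e => e.1 ∈ X ∧ e.2 ∉ X
  have hcross : ∀ i, 1 ≤ (pathArcs (P i)).countP leaves := fun i => by
    obtain ⟨-, hhead, hlast, -, -⟩ := hP i
    obtain ⟨e, he, hleaves⟩ :=
      List.exists_mem_zip_tail_of_head?_of_getLast? hhead hlast hu hv
    exact Multiset.countP_pos.mpr ⟨e, by simpa [pathArcs] using he, hleaves⟩
  calc k = ∑ _i : Fin k, 1 := by simp
    _ ≤ ∑ i, (pathArcs (P i)).countP leaves := Finset.sum_le_sum fun i _ => hcross i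
    _ = (∑ i, pathArcs (P i)).countP leaves := by
      rw [← Multiset.coe_countPAddMonoidHom, map_sum]
    _ ≤ D.arcs.countP leaves := Multiset.countP_le_of_le _ hPD
    _ = D.outDegOf X := (D.outDegOf_eq_countP X).symm

theorem IsTightCut.inter_of_le_outDegOf_union (hX : D.IsTightCut r t k X)
    (ht : D.HasArcDisjointPaths r t k) (hY : D.IsTightCut r s k Y)
    (hXY : k ≤ D.outDegOf (X ∪ Y)) : D.IsTightCut r s k (X ∩ Y) := by
  have hlower : k ≤ D.outDegOf (X ∩ Y) :=
    ht.le_outDegOf (Finset.mem_inter.mpr ⟨hX.1, hY.1⟩) fun h => hX.2.1 (Finset.mem_inter.mp h).1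
  have hsub := D.outDegOf_union_add_outDegOf_inter_le X Y
  refine ⟨Finset.mem_inter.mpr ⟨hX.1, hY.1⟩, fun h => hY.2.1 (Finset.mem_inter.mp h).2, ?_⟩
  rw [hX.2.2, hY.2.2] at hsub
  omega

theorem IsTightCut.inter (hX : D.IsTightCut r s k X) (hs : D.HasArcDisjointPaths r s k)
    (hY : D.IsTightCut r s k Y) : D.IsTightCut r s k (X ∩ Y) :=
  hX.inter_of_le_outDegOf_union hs hY <|
    hs.le_outDegOf (Finset.mem_union_left _ hX.1) (by simp [hX.2.1, hY.2.1])

end MDigraph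

open MDigraph in
theorem tight_cuts_common_intersection_general {α : Type} [DecidableEq α]
    (D : MDigraph α) (r : α) (S : Finset α) (k : ℕ)
    (hcon : D.SteinerRooted r S k)
    (S' : Finset α) (hS' : S' ⊆ S)
    (U : α → Finset α) (hU : ∀ s ∈ S', D.IsTightCut r s k (U s))
    (s₀ : α) (hs₀ : s₀ ∈ S')
    (hdeg : ∀ s ∈ S', s ≠ s₀ → k ≤ D.outDegOf (U s ∪ U s₀)) :
    ∀ s ∈ S', D.IsTightCut r s k (S'.inf' ⟨s₀, hs₀⟩ U) := by
  have hpaths₀ := hcon s₀ (hS' hs₀)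
  have hcut₀ : ∀ t ∈ S', D.IsTightCut r s₀ k (U t ∩ U s₀) := fun t ht => by
    by_cases hts : t = s₀
    · simpa [hts] using hU s₀ hs₀
    · exact (hU t ht).inter_of_le_outDegOf_union (hcon t (hS' ht)) (hU s₀ hs₀) (hdeg t ht hts)
  have hinf : S'.inf' ⟨s₀, hs₀⟩ U = S'.inf' ⟨s₀, hs₀⟩ (fun t => U t ∩ U s₀) :=
    le_antisymm (Finset.le_inf' _ _ fun t ht => le_inf (Finset.inf'_le U ht) (Finset.inf'_le U hs₀))
      (Finset.inf'_mono_fun fun t _ => Finset.inter_subset_left)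
  have htight : D.IsTightCut r s₀ k (S'.inf' ⟨s₀, hs₀⟩ U) :=
    hinf ▸ Finset.inf'_induction _ _ (fun X hX Y hY => hX.inter hpaths₀ hY) hcut₀
  intro s hs
  exact ⟨htight.1, fun h => (hU s hs).2.1 (Finset.inf'_le U hs h), htight.2.2⟩

/-- Let `D` be Steiner rooted `k`-arc-connected with root `r` and
terminal set `S`, let `S' ⊆ S`, and for each `s ∈ S'` let `U s` be a tight `s`-cut.
If there is `s₀ ∈ S'` such that at least `k` arcs leave `U s ∪ U s₀` for every
`s ∈ S' - s₀`, then `⋂_{s ∈ S'} U s` is a tight `s`-cut for every `s ∈ S'`. -/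
theorem tight_cuts_common_intersection {α : Type} [DecidableEq α]
    (D : MDigraph α) (r : α) (S : Finset α) (k : ℕ) (hrS : r ∉ S)
    (hcon : D.SteinerRooted r S k)
    (S' : Finset α) (hS' : S' ⊆ S)
    (U : α → Finset α) (hU : ∀ s ∈ S', D.IsTightCut r s k (U s))
    (s₀ : α) (hs₀ : s₀ ∈ S')
    (hdeg : ∀ s ∈ S', s ≠ s₀ → k ≤ D.outDegOf (U s ∪ U s₀)) :
    ∀ s ∈ S', D.IsTightCut r s k (S'.inf' ⟨s₀, hs₀⟩ U) :=
  tight_cuts_common_intersection_general D r S k hcon S' hS' U hU s₀ hs₀ hdeg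
end

section
/- Let (G = (V, E), S, r) be a minimal 3-regular instance of Steiner Rooted k-Orientation with t Terminals, and let D be a feasible orientation of G. Let S' ⊆ S be nonempty, and let X ⊆ V be a tight s-cut in D for every s ∈ S'. Then X contains no directed cycle that is essential only for terminals in S'; that is, there is no directed cycle C with V(C) ⊆ X such that C is s-essential for at least one terminal s ∈ S and every terminal s ∈ S for which C is s-essential belongs to S'. -/
/-- A finite loopless undirected multigraph on vertex set `verts`; the edges are
recorded as a multiset of unordered pairs, so that parallel edges are allowed. -/
structure MGraph (α : Type) where
  verts : Finset α
  edges : Multiset (Sym2 α)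
  mem_verts : ∀ e ∈ edges, ∀ x ∈ e, x ∈ verts
  loopless : ∀ e ∈ edges, ¬ e.IsDiag

namespace MGraph

variable {α : Type} [DecidableEq α]

/-- The degree of a vertex. -/
def deg (G : MGraph α) (v : α) : ℕ := (G.edges.filter (fun e => v ∈ e)).card

/-- `p` is the vertex sequence of a path in `G` from `u` to `v`. -/
def IsPath (G : MGraph α) (p : List α) (u v : α) : Prop :=
  p.Nodup ∧ p.head? = some u ∧ p.getLast? = some v ∧
    (∀ x ∈ p, x ∈ G.verts) ∧ List.Chain' (fun x y => s(x, y) ∈ G.edges) p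

/-- The multiset of edges traversed by a path given by its vertex sequence. -/
def pathEdges (p : List α) : Multiset (Sym2 α) :=
  ↑((p.zip p.tail).map fun xy => s(xy.1, xy.2))

/-- Delete (one copy of) the edge `e` from `G`. -/
def delEdge (G : MGraph α) (e : Sym2 α) : MGraph α where
  verts := G.verts
  edges := G.edges.erase e
  mem_verts := fun a ha => G.mem_verts a (Multiset.mem_of_mem_erase ha)
  loopless := fun a ha => G.loopless a (Multiset.mem_of_mem_erase ha)

end MGraph

namespace MGraph

variable {α : Type} [DecidableEq α]

/-- `D` is an orientation of the multigraph `G`. -/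
def IsOrientation (G : MGraph α) (D : MDigraph α) : Prop :=
  D.verts = G.verts ∧ D.arcs.map (fun e => s(e.1, e.2)) = G.edges

/-- The instance `(G, S, r)` admits a feasible orientation, i.e. an orientation
that is Steiner rooted `k`-arc-connected. -/
def Feasible (G : MGraph α) (r : α) (S : Finset α) (k : ℕ) : Prop :=
  ∃ D : MDigraph α, G.IsOrientation D ∧ D.SteinerRooted r S k

/-- `(G, S, r)` is a `3`-regular instance: the root `r` and every terminal have
degree exactly `k`, and every other vertex has degree exactly `3`. -/
def ThreeRegularInstance (G : MGraph α) (r : α) (S : Finset α) (k : ℕ) : Prop :=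
  G.deg r = k ∧ (∀ s ∈ S, G.deg s = k) ∧
    ∀ v ∈ G.verts, v ≠ r → v ∉ S → G.deg v = 3

/-- `(G, S, r)` is a minimal instance: it admits a feasible orientation, but the
deletion of any edge destroys all feasible orientations. -/
def MinimalInstance (G : MGraph α) (r : α) (S : Finset α) (k : ℕ) : Prop :=
  G.Feasible r S k ∧ ∀ e ∈ G.edges, ¬ (G.delEdge e).Feasible r S k

end MGraph

namespace MDigraph

variable {α : Type} [DecidableEq α]

/-- A vertex set `U` properly intersects a directed cycle (given by its vertex
sequence `c`) if both `V(c) ∩ U` and `V(c) \ U` are nonempty. -/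
def ProperlyIntersects (U : Finset α) (c : List α) : Prop :=
  (∃ x ∈ c, x ∈ U) ∧ ∃ x ∈ c, x ∉ U

/-- A directed cycle `c` is `s`-essential if some tight `s`-cut properly intersects it. -/
def IsEssential (D : MDigraph α) (r s : α) (k : ℕ) (c : List α) : Prop :=
  ∃ U : Finset α, D.IsTightCut r s k U ∧ ProperlyIntersects U c

/-- The sequence `C 0, …, C (q-1)` of directed cycles is `s`-ordered: there are tight
`s`-cuts `U i` such that `V(C i) ⊆ U j` for `i < j`, `V(C i) ∩ U j = ∅` for `i > j`,
and `U i` properly intersects `C i` for every `i`. -/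
def IsOrderedSeq (D : MDigraph α) (r s : α) (k : ℕ) {q : ℕ} (C : Fin q → List α) : Prop :=
  ∃ U : Fin q → Finset α, (∀ i, D.IsTightCut r s k (U i)) ∧
    (∀ i j : Fin q, i < j → ∀ x ∈ C i, x ∈ U j) ∧
    (∀ i j : Fin q, j < i → ∀ x ∈ C i, x ∉ U j) ∧
    ∀ i, ProperlyIntersects (U i) (C i)

end MDigraph

/-!
Suppose a directed cycle `C ⊆ X` were essential only for terminals of `S'`, and fix `s₀ ∈ S'`.
Since every `s₀`-cut has out-degree at least `k`, submodularity of the out-degree shows that no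
arc goes from `U \ W` to `W \ U` when `U`, `W` are cuts tight for every terminal of `S'`. Hence
some arc `a` of `C` enters none of these cuts: otherwise choose for each arc `e` of `C` such a
cut `W e` entered by `e`; the number of cuts `W e` containing a vertex then strictly increases
along every arc of `C`, which is absurd on a cycle.

Now delete `a` and reverse the rest of `C`. This lowers by one the out-degree of exactly the cuts
entered by `a`. If such a cut `U` were tight for a terminal `s`, then `U` would make `C`
`s`-essential, so `s ∈ S'`, and uncrossing `U` with `X` would give a cut `U ∩ X`, tight for all
of `S'`, entered by `a`. So every cut condition survives, and by Menger's theorem the new digraph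
is a feasible orientation of `G` minus the edge of `a`, contradicting minimality.
-/

namespace MDigraph

variable {α : Type}

section Walks

theorem pathArcs_cons {x y : α} {l : List α} (h : l.head? = some y) :
    pathArcs (x :: l) = (x, y) ::ₘ pathArcs l := by
  cases l with
  | nil => simp at h
  | cons a t =>
    obtain rfl : a = y := by simpa using h
    simp [pathArcs]

theorem pathArcs_append_cons (xs : List α) (x : α) (ys : List α) :
    pathArcs (xs ++ x :: ys) = pathArcs (xs ++ [x]) + pathArcs (x :: ys) := by
  induction xs with
  | nil => simp [pathArcs]
  | cons a t ih =>
    cases t with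
    | nil => simp [pathArcs]
    | cons b u =>
      show pathArcs (a :: (b :: u ++ x :: ys)) = pathArcs (a :: (b :: u ++ [x])) + _
      rw [pathArcs_cons (l := b :: u ++ x :: ys) rfl, pathArcs_cons (l := b :: u ++ [x]) rfl, ih,
        Multiset.cons_add]

theorem isChain_iff_forall_mem_pathArcs {R : α → α → Prop} {l : List α} :
    List.IsChain R l ↔ ∀ e ∈ pathArcs l, R e.1 e.2 := by
  induction l with
  | nil => simp [pathArcs]
  | cons a t ih =>
    cases t with
    | nil => simp [pathArcs]
    | cons b u =>
      rw [pathArcs_cons rfl]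
      simp_all

theorem map_snd_pathArcs (l : List α) : (pathArcs l).map Prod.snd = l.tail := by
  simp [pathArcs, List.map_snd_zip (by simp : l.tail.length ≤ l.length)]

theorem nodup_pathArcs {l : List α} (h : l.Nodup) : (pathArcs l).Nodup := by
  refine Multiset.Nodup.of_map Prod.snd ?_
  rw [map_snd_pathArcs]
  exact h.sublist (List.tail_sublist l)

theorem exists_eq_append_cons_append_cons {l : List α} (h : ¬ l.Nodup) :
    ∃ l₁ x l₂ l₃, l = l₁ ++ x :: l₂ ++ x :: l₃ := by
  induction l with
  | nil => simp at h
  | cons a t ih =>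
    by_cases ha : a ∈ t
    · obtain ⟨l₂, l₃, rfl⟩ := List.append_of_mem ha
      exact ⟨[], a, l₂, l₃, rfl⟩
    · obtain ⟨l₁, x, l₂, l₃, rfl⟩ := ih fun hn => h (List.nodup_cons.2 ⟨ha, hn⟩)
      exact ⟨a :: l₁, x, l₂, l₃, rfl⟩

theorem exists_nodup_pathArcs_le (l : List α) :
    ∃ p : List α, p.Nodup ∧ p.head? = l.head? ∧ p.getLast? = l.getLast? ∧
      pathArcs p ≤ pathArcs l := by
  induction hn : l.length using Nat.strong_induction_on generalizing l with
  | _ n ih =>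
  by_cases hd : l.Nodup
  · exact ⟨l, hd, rfl, rfl, le_rfl⟩
  obtain ⟨l₁, x, l₂, l₃, rfl⟩ := exists_eq_append_cons_append_cons hd
  obtain ⟨p, hp, hhead, hlast, hle⟩ :=
    ih _ (by simp only [List.length_append, List.length_cons] at hn ⊢; omega) (l₁ ++ x :: l₃) rfl
  refine ⟨p, hp, hhead.trans ?_, hlast.trans ?_, hle.trans ?_⟩
  · cases l₁ <;> simp
  · simp only [List.getLast?_append_cons]
  · have hsplit : pathArcs (l₁ ++ x :: l₂ ++ x :: l₃) =
        pathArcs (l₁ ++ [x]) + (pathArcs (x :: l₂ ++ [x]) + pathArcs (x :: l₃)) := by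
      rw [List.append_assoc, List.cons_append, pathArcs_append_cons, ← List.cons_append,
        pathArcs_append_cons (x :: l₂)]
    rw [pathArcs_append_cons l₁, hsplit]
    gcongr
    exact le_add_self

theorem isDipath_of_pathArcs_le {D : MDigraph α} {p : List α} {u v : α} (hp : p.Nodup)
    (hu : p.head? = some u) (hv : p.getLast? = some v) (huv : u ≠ v) (hle : pathArcs p ≤ D.arcs) :
    D.IsDipath p u v := by
  refine ⟨hp, hu, hv, fun x hx => ?_,
    isChain_iff_forall_mem_pathArcs.2 fun e he => Multiset.mem_of_le hle he⟩
  obtain _ | ⟨a, _ | ⟨b, t⟩⟩ := p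
  · simp at hu
  · simp_all
  · obtain rfl | hx := List.mem_cons.1 hx
    · refine D.tail_mem (x, b) (Multiset.mem_of_le hle ?_)
      rw [pathArcs_cons rfl]
      exact Multiset.mem_cons_self _ _
    · have : x ∈ (pathArcs (a :: b :: t)).map Prod.snd := by rw [map_snd_pathArcs]; exact hx
      obtain ⟨e, he, rfl⟩ := Multiset.mem_map.1 this
      exact D.head_mem e (Multiset.mem_of_le hle he)

end Walks

section Counting

variable [DecidableEq α]

def leaving (A : Multiset (α × α)) (U : Finset α) : ℕ :=
  A.countP fun e => e.1 ∈ U ∧ e.2 ∉ U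

def entering (A : Multiset (α × α)) (U : Finset α) : ℕ :=
  A.countP fun e => e.1 ∉ U ∧ e.2 ∈ U

def netOut (A : Multiset (α × α)) (x : α) : ℤ :=
  (A.map Prod.fst).count x - (A.map Prod.snd).count x

theorem outDegOf_eq_leaving (D : MDigraph α) (U : Finset α) :
    D.outDegOf U = leaving D.arcs U :=
  (Multiset.countP_eq_card_filter _ _).symm

@[simp] theorem leaving_add (A B : Multiset (α × α)) (U : Finset α) :
    leaving (A + B) U = leaving A U + leaving B U :=
  Multiset.countP_add _ _ _

@[simp] theorem netOut_add (A B : Multiset (α × α)) (x : α) :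
    netOut (A + B) x = netOut A x + netOut B x := by
  simp only [netOut, Multiset.map_add, Multiset.count_add]
  push_cast
  ring

theorem netOut_cons (e : α × α) (A : Multiset (α × α)) (x : α) :
    netOut (e ::ₘ A) x = netOut A x + (if x = e.1 then 1 else 0) - (if x = e.2 then 1 else 0) := by
  simp only [netOut, Multiset.map_cons, Multiset.count_cons]
  push_cast
  ring

theorem leaving_sub {A B : Multiset (α × α)} (h : B ≤ A) (U : Finset α) :
    leaving (A - B) U = leaving A U - leaving B U :=
  Multiset.countP_sub h _

theorem netOut_sub {A B : Multiset (α × α)} (h : B ≤ A) (x : α) :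
    netOut (A - B) x = netOut A x - netOut B x := by
  have h' := netOut_add (A - B) B x
  rw [tsub_add_cancel_of_le h] at h'
  omega

theorem leaving_mono {A B : Multiset (α × α)} (h : A ≤ B) (U : Finset α) :
    leaving A U ≤ leaving B U :=
  Multiset.countP_le_of_le _ h

theorem leaving_sum {ι : Type} (s : Finset ι) (f : ι → Multiset (α × α)) (U : Finset α) :
    leaving (∑ i ∈ s, f i) U = ∑ i ∈ s, leaving (f i) U :=
  map_sum (Multiset.countPAddMonoidHom _) f s

theorem leaving_map_swap (A : Multiset (α × α)) (U : Finset α) :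
    leaving (A.map Prod.swap) U = entering A U := by
  simp only [leaving, entering, Multiset.countP_map, ← Multiset.countP_eq_card_filter]
  exact Multiset.countP_congr rfl fun _ _ => propext and_comm

theorem netOut_map_swap (A : Multiset (α × α)) (x : α) :
    netOut (A.map Prod.swap) x = -netOut A x := by
  simp only [netOut, Multiset.map_map]
  rw [show Prod.fst ∘ Prod.swap = @Prod.snd α α from rfl,
    show Prod.snd ∘ Prod.swap = @Prod.fst α α from rfl]
  ring

theorem sum_netOut (A : Multiset (α × α)) (U : Finset α) :
    ∑ x ∈ U, netOut A x = leaving A U - entering A U := by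
  induction A using Multiset.induction_on with
  | empty => simp [netOut, leaving, entering]
  | cons e A ih =>
    simp only [netOut_cons, Finset.sum_sub_distrib, Finset.sum_add_distrib, Finset.sum_ite_eq',
      ih, leaving, entering, Multiset.countP_cons]
    split_ifs <;> simp_all <;> omega

theorem netOut_pathArcs (l : List α) (x : α) :
    netOut (pathArcs l) x =
      (if l.head? = some x then 1 else 0) - (if l.getLast? = some x then 1 else 0) := by
  induction l with
  | nil => simp [netOut, pathArcs]
  | cons a t ih =>
    cases t with
    | nil => simp [netOut, pathArcs]
    | cons b u =>
      rw [pathArcs_cons rfl, netOut_cons, ih, List.getLast?_cons_cons]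
      simp only [List.head?_cons, Option.some.injEq, @eq_comm _ x]
      split_ifs <;> omega

theorem netOut_eq_zero_of_map_fst_eq_map_snd {K : Multiset (α × α)}
    (hK : K.map Prod.fst = K.map Prod.snd) (x : α) : netOut K x = 0 := by
  simp [netOut, hK]

theorem leaving_eq_entering_of_map_fst_eq_map_snd {K : Multiset (α × α)}
    (hK : K.map Prod.fst = K.map Prod.snd) (U : Finset α) : leaving K U = entering K U := by
  have h := sum_netOut K U
  simp only [netOut_eq_zero_of_map_fst_eq_map_snd hK, Finset.sum_const_zero] at h
  omega

end Counting

section Menger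

variable [DecidableEq α]

theorem exists_mem_pathArcs_leaving {U : Finset α} :
    ∀ {l : List α} {u v : α}, l.head? = some u → l.getLast? = some v → u ∈ U → v ∉ U →
      ∃ e ∈ pathArcs l, e.1 ∈ U ∧ e.2 ∉ U
  | [], _, _, hu, _, _, _ => by simp at hu
  | [_], _, _, hu, hv, huU, hvU => by simp_all
  | a :: b :: t, u, v, hu, hv, huU, hvU => by
    obtain rfl : a = u := by simpa using hu
    rw [pathArcs_cons rfl]
    by_cases hb : b ∈ U
    · obtain ⟨e, he, heU⟩ := exists_mem_pathArcs_leaving (l := b :: t) rfl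
        (by rwa [List.getLast?_cons_cons] at hv) hb hvU
      exact ⟨e, Multiset.mem_cons_of_mem he, heU⟩
    · exact ⟨(a, b), Multiset.mem_cons_self _ _, huU, hb⟩

theorem HasArcDisjointPaths.le_outDegOf_s16 {D : MDigraph α} {r s : α} {k : ℕ}
    (h : D.HasArcDisjointPaths r s k) {U : Finset α} (hr : r ∈ U) (hs : s ∉ U) :
    k ≤ D.outDegOf U := by
  obtain ⟨P, hP, hle⟩ := h
  have hcross : ∀ i, 1 ≤ leaving (pathArcs (P i)) U := fun i => by
    obtain ⟨e, he, heU⟩ := exists_mem_pathArcs_leaving (hP i).2.1 (hP i).2.2.1 hr hs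
    exact Multiset.countP_pos.2 ⟨e, he, heU⟩
  calc k = ∑ _i : Fin k, 1 := by simp
    _ ≤ ∑ i, leaving (pathArcs (P i)) U := Finset.sum_le_sum fun i _ => hcross i
    _ = leaving (∑ i, pathArcs (P i)) U := (leaving_sum _ _ _).symm
    _ ≤ D.outDegOf U := (outDegOf_eq_leaving D U) ▸ leaving_mono hle U

def IsFlow (F : Multiset (α × α)) (r s : α) (j : ℕ) : Prop :=
  (∀ x, x ≠ r → x ≠ s → netOut F x = 0) ∧ netOut F r = j

def IsResidualArc (A F : Multiset (α × α)) (y z : α) : Prop :=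
  (y, z) ∈ A - F ∨ (z, y) ∈ F

theorem exists_augmentation {A F : Multiset (α × α)} (hF : F ≤ A) {p : List α} (hp : p.Nodup)
    (hres : ∀ e ∈ pathArcs p, IsResidualArc A F e.1 e.2) :
    ∃ F' ≤ A, ∀ x, netOut F' x = netOut F x + netOut (pathArcs p) x := by
  have hnd := nodup_pathArcs hp
  let fwd := (pathArcs p).filter (· ∈ A - F)
  let back := (pathArcs p).filter (· ∉ A - F)
  have hfwd : fwd ≤ A - F :=
    (Multiset.le_iff_subset (hnd.filter _)).2 fun e he => (Multiset.mem_filter.1 he).2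
  have hback : back.map Prod.swap ≤ F := by
    refine (Multiset.le_iff_subset ((hnd.filter _).map Prod.swap_injective)).2 fun e he => ?_
    obtain ⟨e', he', rfl⟩ := Multiset.mem_map.1 he
    obtain ⟨hmem, hnot⟩ := Multiset.mem_filter.1 he'
    exact (hres e' hmem).resolve_left hnot
  have hsplit : fwd + back = pathArcs p := Multiset.filter_add_not _ _
  refine ⟨F + fwd - back.map Prod.swap, tsub_le_self.trans ?_, fun x => ?_⟩
  · calc F + fwd ≤ F + (A - F) := by gcongr
      _ = A := add_tsub_cancel_of_le hF
  · rw [netOut_sub (hback.trans le_self_add), netOut_add, netOut_map_swap, ← hsplit, netOut_add]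
    ring

theorem IsFlow.exists_succ_of_reachable {A F : Multiset (α × α)} {r s : α} {j : ℕ} (hrs : r ≠ s)
    (hF : F ≤ A) (hflow : IsFlow F r s j)
    (hreach : Relation.ReflTransGen (IsResidualArc A F) r s) :
    ∃ F' ≤ A, IsFlow F' r s (j + 1) := by
  obtain ⟨l, hl, hlast⟩ := List.exists_isChain_cons_of_relationReflTransGen hreach
  obtain ⟨p, hp, hhead, hplast, hle⟩ := exists_nodup_pathArcs_le (r :: l)
  obtain ⟨F', hF'A, hnet⟩ := exists_augmentation hF hp fun e he =>
    isChain_iff_forall_mem_pathArcs.1 hl e (Multiset.mem_of_le hle he)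
  have hp_head : p.head? = some r := hhead
  have hp_last : p.getLast? = some s := by
    rw [hplast, List.getLast?_eq_some_getLast (List.cons_ne_nil _ _), hlast]
  refine ⟨F', hF'A, fun x hxr hxs => ?_, ?_⟩
  · rw [hnet, hflow.1 x hxr hxs, netOut_pathArcs, hp_head, hp_last]
    simp [Ne.symm hxr, Ne.symm hxs]
  · rw [hnet, hflow.2, netOut_pathArcs, hp_head, hp_last]
    simp [hrs.symm]

theorem IsFlow.exists_leaving_eq_of_not_reachable {A F : Multiset (α × α)} {r s : α} {j : ℕ}
    (hF : F ≤ A) (hflow : IsFlow F r s j)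
    (hreach : ¬ Relation.ReflTransGen (IsResidualArc A F) r s) :
    ∃ U : Finset α, r ∈ U ∧ s ∉ U ∧ leaving A U = j := by
  classical
  let U := (insert r (A.map Prod.fst + A.map Prod.snd).toFinset).filter
    (Relation.ReflTransGen (IsResidualArc A F) r)
  have hrU : r ∈ U := Finset.mem_filter.2 ⟨Finset.mem_insert_self _ _, .refl⟩
  have hsU : s ∉ U := fun hs => hreach (Finset.mem_filter.1 hs).2
  have hclosed : ∀ {y z}, y ∈ U → IsResidualArc A F y z → z ∈ U := by
    intro y z hy hyz
    refine Finset.mem_filter.2 ⟨Finset.mem_insert_of_mem ?_, (Finset.mem_filter.1 hy).2.tail hyz⟩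
    rcases hyz with h | h
    · have := Multiset.mem_map_of_mem Prod.snd (Multiset.mem_of_le tsub_le_self h)
      simp_all
    · have := Multiset.mem_map_of_mem Prod.fst (Multiset.mem_of_le hF h)
      simp_all
  have hout : leaving (A - F) U = 0 :=
    Multiset.countP_eq_zero.2 fun e he ⟨h1, h2⟩ => h2 (hclosed h1 (Or.inl he))
  have hin : entering F U = 0 :=
    Multiset.countP_eq_zero.2 fun e he ⟨h1, h2⟩ => h1 (hclosed h2 (Or.inr he))
  have hval : ∑ x ∈ U, netOut F x = j := by
    rw [Finset.sum_eq_single r (fun x hx hxr => hflow.1 x hxr (ne_of_mem_of_not_mem hx hsU))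
      (fun h => absurd hrU h), hflow.2]
  have hA : leaving A U = leaving F U + leaving (A - F) U := by
    rw [← leaving_add, add_tsub_cancel_of_le hF]
  refine ⟨U, hrU, hsU, ?_⟩
  rw [sum_netOut] at hval
  omega

theorem exists_isFlow_of_le_leaving {A : Multiset (α × α)} {r s : α} (hrs : r ≠ s) {k : ℕ}
    (hcut : ∀ U : Finset α, r ∈ U → s ∉ U → k ≤ leaving A U) :
    ∃ F ≤ A, IsFlow F r s k := by
  induction k with
  | zero => exact ⟨0, Multiset.zero_le _, fun _ _ _ => by simp [netOut], by simp [netOut]⟩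
  | succ j ih =>
    obtain ⟨F, hF, hflow⟩ := ih fun U hr hs => (hcut U hr hs).trans' (Nat.le_succ j)
    by_cases hreach : Relation.ReflTransGen (IsResidualArc A F) r s
    · exact hflow.exists_succ_of_reachable hrs hF hreach
    · obtain ⟨U, hr, hs, hU⟩ := hflow.exists_leaving_eq_of_not_reachable hF hreach
      have := hcut U hr hs
      omega

theorem exists_walk_of_netOut_pos {F : Multiset (α × α)} {x s : α} (hxs : x ≠ s)
    (hx : 0 < netOut F x) (hrest : ∀ z, z ≠ x → z ≠ s → 0 ≤ netOut F z) :
    ∃ l : List α, l.head? = some x ∧ l.getLast? = some s ∧ pathArcs l ≤ F := by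
  induction hn : F.card using Nat.strong_induction_on generalizing F x with
  | _ n ih =>
  obtain ⟨e, he, rfl⟩ : ∃ e ∈ F, e.1 = x := by
    have : 0 < (F.map Prod.fst).count x := by unfold netOut at hx; omega
    simpa using Multiset.count_pos.1 this
  by_cases hes : e.2 = s
  · refine ⟨[e.1, s], rfl, rfl, ?_⟩
    subst hes
    simpa [pathArcs] using he
  have hnet : ∀ z, netOut F z = netOut (F.erase e) z + (if z = e.1 then 1 else 0) -
      (if z = e.2 then 1 else 0) := fun z => by
    rw [← netOut_cons, Multiset.cons_erase he]
  have hstart : 0 < netOut (F.erase e) e.2 := by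
    have h1 := hnet e.2
    rw [if_pos rfl] at h1
    split_ifs at h1 with hloop
    · rw [← hloop] at hx
      omega
    · have := hrest e.2 hloop hes
      omega
  have hrest' : ∀ z, z ≠ e.2 → z ≠ s → 0 ≤ netOut (F.erase e) z := by
    intro z hz2 hzs
    have h1 := hnet z
    rw [if_neg hz2] at h1
    split_ifs at h1 with hz1
    · rw [← hz1] at hx
      omega
    · have := hrest z hz1 hzs
      omega
  obtain ⟨l, hhead, hlast, hle⟩ := ih _ (by rw [← hn, ← Multiset.card_erase_add_one he]; omega)
    hes hstart hrest' rfl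
  refine ⟨e.1 :: l, rfl, ?_, ?_⟩
  · cases l with
    | nil => simp at hhead
    | cons => rwa [List.getLast?_cons_cons]
  · rw [pathArcs_cons hhead, ← Multiset.cons_erase he]
    exact Multiset.cons_le_cons e hle

theorem IsFlow.exists_paths {r s : α} (hrs : r ≠ s) {k : ℕ} :
    ∀ {F : Multiset (α × α)}, IsFlow F r s k → ∃ P : Fin k → List α,
      (∀ i, (P i).Nodup ∧ (P i).head? = some r ∧ (P i).getLast? = some s) ∧
        ∑ i, pathArcs (P i) ≤ F := by
  induction k with
  | zero => exact fun _ => ⟨Fin.elim0, fun i => i.elim0, by simp⟩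
  | succ k ih =>
    intro F hflow
    obtain ⟨l, hhead, hlast, hle⟩ := exists_walk_of_netOut_pos hrs (by rw [hflow.2]; omega)
      fun z hzr hzs => (hflow.1 z hzr hzs).ge
    obtain ⟨p, hp, hphead, hplast, hple⟩ := exists_nodup_pathArcs_le l
    rw [hhead] at hphead
    rw [hlast] at hplast
    have hpF := hple.trans hle
    have hflow' : IsFlow (F - pathArcs p) r s k := by
      refine ⟨fun x hxr hxs => ?_, ?_⟩
      · rw [netOut_sub hpF, hflow.1 x hxr hxs, netOut_pathArcs, hphead, hplast]
        simp [Ne.symm hxr, Ne.symm hxs]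
      · rw [netOut_sub hpF, hflow.2, netOut_pathArcs, hphead, hplast]
        simp [hrs.symm]
    obtain ⟨P, hP, hPle⟩ := ih hflow'
    refine ⟨Fin.cons p P, Fin.cases ⟨hp, hphead, hplast⟩ hP, ?_⟩
    rw [Fin.sum_univ_succ]
    calc pathArcs p + ∑ i, pathArcs (P i) ≤ pathArcs p + (F - pathArcs p) := by
          simpa using hPle
      _ = F := add_tsub_cancel_of_le hpF

theorem hasArcDisjointPaths_iff (D : MDigraph α) {r s : α} (hrs : r ≠ s) (k : ℕ) :
    D.HasArcDisjointPaths r s k ↔ ∀ U : Finset α, r ∈ U → s ∉ U → k ≤ D.outDegOf U := by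
  refine ⟨fun h U hr hs => h.le_outDegOf_s16 hr hs, fun hcut => ?_⟩
  obtain ⟨F, hFA, hflow⟩ := exists_isFlow_of_le_leaving (A := D.arcs) hrs fun U hr hs =>
    outDegOf_eq_leaving D U ▸ hcut U hr hs
  obtain ⟨P, hP, hle⟩ := hflow.exists_paths hrs
  have hsum := hle.trans hFA
  refine ⟨P, fun i => isDipath_of_pathArcs_le (hP i).1 (hP i).2.1 (hP i).2.2 hrs ?_, hsum⟩
  exact (Finset.single_le_sum (fun j _ => Multiset.zero_le (pathArcs (P j)))
    (Finset.mem_univ i)).trans hsum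

end Menger

section Cycles

theorem map_fst_cycleArcs (c : List α) : (cycleArcs c).map Prod.fst = c := by
  simp [cycleArcs, List.map_fst_zip]

theorem map_snd_cycleArcs (c : List α) : (cycleArcs c).map Prod.snd = c := by
  simp only [cycleArcs, Multiset.map_coe, List.map_snd_zip (l₁ := c) (l₂ := c.rotate 1) (by simp)]
  exact Multiset.coe_eq_coe.2 (List.rotate_perm c 1)

theorem mem_of_mem_cycleArcs {c : List α} {a : α × α} (ha : a ∈ cycleArcs c) :
    a.1 ∈ c ∧ a.2 ∈ c := by
  constructor
  · simpa [map_fst_cycleArcs] using Multiset.mem_map_of_mem Prod.fst ha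
  · simpa [map_snd_cycleArcs] using Multiset.mem_map_of_mem Prod.snd ha

theorem cycleArcs_ne_zero {c : List α} (hc : c ≠ []) : cycleArcs c ≠ 0 := by
  intro h
  have := map_fst_cycleArcs c
  rw [h, Multiset.map_zero] at this
  exact hc ((Multiset.coe_eq_zero c).1 this.symm)

theorem not_forall_lt_of_map_fst_eq_map_snd {K : Multiset (α × α)}
    (hK : K.map Prod.fst = K.map Prod.snd) (hne : K ≠ 0) (ρ : α → ℕ) :
    ¬ ∀ e ∈ K, ρ e.1 < ρ e.2 := by
  intro h
  have hlt := Multiset.sum_lt_sum_of_nonempty hne h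
  have heq : (K.map fun e => ρ e.1).sum = (K.map fun e => ρ e.2).sum := by
    simpa [Multiset.map_map] using congrArg (fun m => (m.map ρ).sum) hK
  exact hlt.ne heq

end Cycles

section Uncrossing

variable [DecidableEq α]

theorem leaving_inter_add_leaving_union_add_crossing_le (A : Multiset (α × α)) (U W : Finset α) :
    leaving A (U ∩ W) + leaving A (U ∪ W) + A.countP (fun e => e.1 ∈ U \ W ∧ e.2 ∈ W \ U) ≤
      leaving A U + leaving A W := by
  induction A using Multiset.induction_on with
  | empty => simp [leaving]
  | cons e A ih =>
    have harc : ((if e.1 ∈ U ∩ W ∧ e.2 ∉ U ∩ W then 1 else 0) +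
        (if e.1 ∈ U ∪ W ∧ e.2 ∉ U ∪ W then 1 else 0) +
        (if e.1 ∈ U \ W ∧ e.2 ∈ W \ U then 1 else 0) : ℕ) ≤
        (if e.1 ∈ U ∧ e.2 ∉ U then 1 else 0) + (if e.1 ∈ W ∧ e.2 ∉ W then 1 else 0) := by
      by_cases h1 : e.1 ∈ U <;> by_cases h2 : e.1 ∈ W <;> by_cases h3 : e.2 ∈ U <;>
        by_cases h4 : e.2 ∈ W <;> simp [h1, h2, h3, h4]
    simp only [leaving, Multiset.countP_cons] at ih ⊢
    omega

theorem IsTightCut.uncross {D : MDigraph α} {r s : α} {k : ℕ}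
    (hpaths : D.HasArcDisjointPaths r s k) {U W : Finset α} (hU : D.IsTightCut r s k U)
    (hW : D.IsTightCut r s k W) :
    D.IsTightCut r s k (U ∩ W) ∧ ∀ e ∈ D.arcs, ¬(e.1 ∈ U \ W ∧ e.2 ∈ W \ U) := by
  have hinter := hpaths.le_outDegOf_s16 (Finset.mem_inter.2 ⟨hU.1, hW.1⟩)
    fun h => hU.2.1 (Finset.mem_inter.1 h).1
  have hunion := hpaths.le_outDegOf_s16 (Finset.mem_union_left _ hU.1)
    fun h => (Finset.mem_union.1 h).elim hU.2.1 hW.2.1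
  have hsub := leaving_inter_add_leaving_union_add_crossing_le D.arcs U W
  have hUk := hU.2.2
  have hWk := hW.2.2
  simp only [outDegOf_eq_leaving] at hinter hunion hUk hWk
  refine ⟨⟨Finset.mem_inter.2 ⟨hU.1, hW.1⟩, fun h => hU.2.1 (Finset.mem_inter.1 h).1, ?_⟩,
    fun e he hcross => ?_⟩
  · rw [outDegOf_eq_leaving]
    omega
  · have : 0 < D.arcs.countP fun e => e.1 ∈ U \ W ∧ e.2 ∈ W \ U :=
      Multiset.countP_pos.2 ⟨e, he, hcross⟩
    omega

theorem exists_mem_forall_not_enters {K : Multiset (α × α)}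
    (hK : K.map Prod.fst = K.map Prod.snd) (hne : K ≠ 0) (𝒯 : Set (Finset α))
    (hcross : ∀ U ∈ 𝒯, ∀ W ∈ 𝒯, ∀ e ∈ K, ¬(e.1 ∈ U \ W ∧ e.2 ∈ W \ U)) :
    ∃ a ∈ K, ∀ W ∈ 𝒯, ¬(a.1 ∉ W ∧ a.2 ∈ W) := by
  classical
  by_contra! h
  choose! W hW𝒯 hWenter using h
  refine not_forall_lt_of_map_fst_eq_map_snd hK hne
    (fun x => (K.toFinset.filter fun e => x ∈ W e).card) fun e he => Finset.card_lt_card ?_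
  refine (Finset.ssubset_iff_of_subset fun e' he' => ?_).2
    ⟨e, by simp [he, (hWenter e he).2], by simp [(hWenter e he).1]⟩
  simp only [Finset.mem_filter, Multiset.mem_toFinset] at he' ⊢
  refine ⟨he'.1, by_contra fun he₂ => hcross (W e') (hW𝒯 e' he'.1) (W e) (hW𝒯 e he) e he ?_⟩
  simp [he'.2, (hWenter e he).1, (hWenter e he).2, he₂]

end Uncrossing

section Reversal

variable [DecidableEq α]

theorem mem_or_swap_mem_of_mem_reverse {A K : Multiset (α × α)} (hK : K ≤ A) {a e : α × α}
    (he : e ∈ (A - K) + (K.erase a).map Prod.swap) : e ∈ A ∨ e.swap ∈ A := by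
  rcases Multiset.mem_add.1 he with he | he
  · exact Or.inl (Multiset.mem_of_le tsub_le_self he)
  · obtain ⟨e', he', rfl⟩ := Multiset.mem_map.1 he
    exact Or.inr (Multiset.mem_of_le (hK.trans' (Multiset.erase_le a K)) he')

def reverseExcept (D : MDigraph α) (K : Multiset (α × α)) (hK : K ≤ D.arcs) (a : α × α) :
    MDigraph α where
  verts := D.verts
  arcs := (D.arcs - K) + (K.erase a).map Prod.swap
  tail_mem e he := (mem_or_swap_mem_of_mem_reverse hK he).elim (D.tail_mem e) (D.head_mem e.swap)
  head_mem e he := (mem_or_swap_mem_of_mem_reverse hK he).elim (D.head_mem e) (D.tail_mem e.swap)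
  loopless e he := (mem_or_swap_mem_of_mem_reverse hK he).elim (D.loopless e)
    fun h => (D.loopless e.swap h).symm

theorem outDegOf_reverseExcept_add {D : MDigraph α} {K : Multiset (α × α)} (hK : K ≤ D.arcs)
    (hbal : K.map Prod.fst = K.map Prod.snd) {a : α × α} (ha : a ∈ K) (U : Finset α) :
    (D.reverseExcept K hK a).outDegOf U + (if a.1 ∉ U ∧ a.2 ∈ U then 1 else 0) =
      D.outDegOf U := by
  have herase : entering (K.erase a) U + (if a.1 ∉ U ∧ a.2 ∈ U then 1 else 0) = entering K U := by
    conv_rhs => rw [← Multiset.cons_erase ha]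
    simp only [entering, Multiset.countP_cons]
  have hbalU := leaving_eq_entering_of_map_fst_eq_map_snd hbal U
  have hKU := leaving_mono hK U
  simp only [outDegOf_eq_leaving, reverseExcept, leaving_add, leaving_map_swap, leaving_sub hK]
  omega

theorem _root_.MGraph.IsOrientation.reverseExcept {G : MGraph α} {D : MDigraph α}
    (hor : G.IsOrientation D) {K : Multiset (α × α)} (hK : K ≤ D.arcs) {a : α × α}
    (ha : a ∈ K) : (G.delEdge s(a.1, a.2)).IsOrientation (D.reverseExcept K hK a) := by
  refine ⟨hor.1, ?_⟩
  let f : α × α → Sym2 α := fun e => s(e.1, e.2)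
  have hswap : ((K.erase a).map Prod.swap).map f = (K.erase a).map f := by
    rw [Multiset.map_map]
    exact Multiset.map_congr rfl fun e _ => Sym2.eq_swap
  change ((D.arcs - K) + (K.erase a).map Prod.swap).map f = G.edges.erase (f a)
  rw [Multiset.map_add, hswap, Multiset.map_erase_of_mem f K ha,
    ← Multiset.erase_add_right_pos _ (Multiset.mem_map_of_mem f ha), ← Multiset.map_add,
    tsub_add_cancel_of_le hK, hor.2]

theorem SteinerRooted.reverseExcept {D : MDigraph α} {r : α} {S : Finset α} {k : ℕ}
    (hfeas : D.SteinerRooted r S k) (hrS : r ∉ S) {K : Multiset (α × α)} (hK : K ≤ D.arcs)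
    (hbal : K.map Prod.fst = K.map Prod.snd) {a : α × α} (ha : a ∈ K)
    (hgood : ∀ s ∈ S, ∀ U, D.IsTightCut r s k U → ¬(a.1 ∉ U ∧ a.2 ∈ U)) :
    (D.reverseExcept K hK a).SteinerRooted r S k := by
  intro s hs
  have hrs : r ≠ s := fun h => hrS (h ▸ hs)
  refine (hasArcDisjointPaths_iff _ hrs k).2 fun U hr hsU => ?_
  have hD := (hfeas s hs).le_outDegOf_s16 hr hsU
  have hrev := outDegOf_reverseExcept_add hK hbal ha U
  split_ifs at hrev with henter
  · have : D.outDegOf U ≠ k := fun htight => hgood s hs U ⟨hr, hsU, htight⟩ henter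
    omega
  · omega

end Reversal

end MDigraph

theorem no_cycle_in_common_tight_cut_general {α : Type} [DecidableEq α]
    (G : MGraph α) (r : α) (S : Finset α) (k : ℕ)
    (hrS : r ∉ S)
    (hmin : G.MinimalInstance r S k)
    (D : MDigraph α) (hor : G.IsOrientation D) (hfeas : D.SteinerRooted r S k)
    (S' : Finset α) (hne : S'.Nonempty) (hsub : S' ⊆ S)
    (X : Finset α) (hX : ∀ s ∈ S', D.IsTightCut r s k X) :
    ¬ ∃ c : List α, D.IsDicycle c ∧ (∀ x ∈ c, x ∈ X) ∧
      (∃ s ∈ S, D.IsEssential r s k c) ∧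
      (∀ s ∈ S, D.IsEssential r s k c → s ∈ S') := by
  rintro ⟨c, ⟨-, hlen, hcD⟩, hcX, -, honly⟩
  obtain ⟨s₀, hs₀⟩ := hne
  have hbal : (MDigraph.cycleArcs c).map Prod.fst = (MDigraph.cycleArcs c).map Prod.snd := by
    rw [MDigraph.map_fst_cycleArcs, MDigraph.map_snd_cycleArcs]
  have hc : c ≠ [] := by rintro rfl; simp at hlen
  obtain ⟨a, ha, hgood⟩ := MDigraph.exists_mem_forall_not_enters hbal
    (MDigraph.cycleArcs_ne_zero hc)
    {W | ∀ s ∈ S', D.IsTightCut r s k W} fun U hU W hW e he =>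
      ((hU s₀ hs₀).uncross (hfeas s₀ (hsub hs₀)) (hW s₀ hs₀)).2 e (Multiset.mem_of_le hcD he)
  obtain ⟨ha₁, ha₂⟩ := MDigraph.mem_of_mem_cycleArcs ha
  have hedge : s(a.1, a.2) ∈ G.edges := by
    rw [← hor.2]
    exact Multiset.mem_map_of_mem _ (Multiset.mem_of_le hcD ha)
  refine hmin.2 _ hedge ⟨_, hor.reverseExcept hcD ha, hfeas.reverseExcept hrS hcD hbal ha ?_⟩
  rintro s hs U hU ⟨ha₁U, ha₂U⟩
  have hsS' : s ∈ S' := honly s hs ⟨U, hU, ⟨a.2, ha₂, ha₂U⟩, a.1, ha₁, ha₁U⟩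
  have hUX := (hU.uncross (hfeas s hs) (hX s hsS')).1
  have hUX_common : ∀ s' ∈ S', D.IsTightCut r s' k (U ∩ X) := fun s' hs' =>
    ⟨hUX.1, fun h => (hX s' hs').2.1 (Finset.mem_inter.1 h).2, hUX.2.2⟩
  exact hgood (U ∩ X) hUX_common
    ⟨fun h => ha₁U (Finset.mem_inter.1 h).1, Finset.mem_inter.2 ⟨ha₂U, hcX a.2 ha₂⟩⟩

/-- Let `(G, S, r)` be a minimal `3`-regular instance of Steiner
Rooted `k`-Orientation with `t` terminals and `D` a feasible orientation. If
`X` is a tight `s`-cut for every `s` in a nonempty `S' ⊆ S`, then `X` contains no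
directed cycle that is essential only for terminals in `S'`. -/
theorem no_cycle_in_common_tight_cut {α : Type} [DecidableEq α]
    (G : MGraph α) (r : α) (S : Finset α) (k t : ℕ)
    (hrS : r ∉ S) (hcard : S.card = t)
    (hr : r ∈ G.verts) (hS : ↑S ⊆ (G.verts : Set α))
    (hreg : G.ThreeRegularInstance r S k) (hmin : G.MinimalInstance r S k)
    (D : MDigraph α) (hor : G.IsOrientation D) (hfeas : D.SteinerRooted r S k)
    (S' : Finset α) (hne : S'.Nonempty) (hsub : S' ⊆ S)
    (X : Finset α) (hX : ∀ s ∈ S', D.IsTightCut r s k X) :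
    ¬ ∃ c : List α, D.IsDicycle c ∧ (∀ x ∈ c, x ∈ X) ∧
      (∃ s ∈ S, D.IsEssential r s k c) ∧
      (∀ s ∈ S, D.IsEssential r s k c → s ∈ S') :=
  no_cycle_in_common_tight_cut_general G r S k hrS hmin D hor hfeas S' hne hsub X hX
end
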